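/- arXiv:2205.04613 — 2 statements merged into one kernel-verified Lean document; each statement's English description precedes it below -/
import Mathlib

section
/- Let Y and A be finite nonempty sets, P : A × Y → ℝ a probability mass function, and L : A × Y → ℝ a loss function. Suppose P has a signal-based representation for L: there exist a finite set S, a probability mass function π : S × Y → ℝ, and a map α : S → A such that (1) ∑_{s} π(s,y) = ∑_{a} P(a,y) for every y; (2) for every s with π(s) := ∑_y π(s,y) > 0 and every a' ∈ A, ∑_{y} π(s,y)·L(α(s),y) ≤ ∑_{y} π(s,y)·L(a',y); and (3) P(a,y) = ∑_{s : α(s) = a} π(s,y) for every a, y. Then confidence scores are loss-calibrated to L: for every a, a' ∈ A, ∑_{y} P(a,y)L(a,y) ≤ ∑_{y} P(a,y)L(a',y). -/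
open Finset
open scoped Classical

/-! Expected loss under `P` decomposes, through the fibres of `α`, into posterior expected
losses of the signals; on each fibre the assigned score is Bayes-optimal, and signals of
zero mass contribute nothing. -/

theorem Finset.sum_sum_ite_mul_eq_sum_filter {S A Y R : Type*} [Fintype Y] [CommSemiring R]
    [DecidableEq A] (t : Finset S) (π : S → Y → R) (α : S → A) (a : A) (f : Y → R) :
    ∑ y, (∑ s ∈ t, if α s = a then π s y else 0) * f y =
      ∑ s ∈ t with α s = a, ∑ y, π s y * f y := by
  simp_rw [← Finset.sum_filter, Finset.sum_mul]
  exact Finset.sum_comm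

theorem Finset.sum_mul_le_sum_mul_of_sum_pos_imp {Y R : Type*} [Fintype Y] [Semiring R]
    [PartialOrder R] [IsOrderedRing R] {w f g : Y → R} (hw : ∀ y, 0 ≤ w y)
    (h : 0 < ∑ y, w y → ∑ y, w y * f y ≤ ∑ y, w y * g y) :
    ∑ y, w y * f y ≤ ∑ y, w y * g y := by
  rcases (Finset.sum_nonneg fun y _ => hw y).lt_or_eq with hpos | hzero
  · exact h hpos
  · have hw_zero : ∀ y, w y = 0 := fun y =>
      (Finset.sum_eq_zero_iff_of_nonneg fun y _ => hw y).mp hzero.symm y (Finset.mem_univ y)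
    simp [hw_zero]

theorem SBR_implies_loss_calibrated_general
    {A Y : Type} [Fintype Y]
    (P : A → Y → ℝ) (L : A → Y → ℝ)
    (S : Type) [Fintype S] (π : S → Y → ℝ) (α : S → A)
    -- π is a probability mass function
    (hπ_nonneg : ∀ s y, 0 ≤ π s y)
    -- (2) each realized signal's assigned score minimizes posterior expected loss
    (hopt : ∀ s : S, 0 < ∑ y : Y, π s y →
      ∀ a' : A, ∑ y : Y, π s y * L (α s) y ≤ ∑ y : Y, π s y * L a' y)
    -- (3) the induced joint distribution of scores and labels equals P
    (hjoint : ∀ (a : A) (y : Y), P a y = ∑ s : S, if α s = a then π s y else 0) :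
    ∀ a a' : A, ∑ y : Y, P a y * L a y ≤ ∑ y : Y, P a y * L a' y := by
  intro a a'
  have expected_loss : ∀ b, ∑ y, P a y * L b y = ∑ s with α s = a, ∑ y, π s y * L b y :=
    fun b => by simp_rw [hjoint]; exact Finset.sum_sum_ite_mul_eq_sum_filter _ π α a _
  rw [expected_loss, expected_loss]
  refine Finset.sum_le_sum fun s hs => ?_
  rw [← (Finset.mem_filter.mp hs).2]
  exact Finset.sum_mul_le_sum_mul_of_sum_pos_imp (hπ_nonneg s) fun hpos => hopt s hpos a'

/-- If `P` has a signal-based representation for `L`, then confidence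
scores are loss-calibrated to `L`. -/
theorem SBR_implies_loss_calibrated
    {A Y : Type} [Fintype A] [Fintype Y] [Nonempty A] [Nonempty Y]
    (P : A → Y → ℝ) (L : A → Y → ℝ)
    (hP_nonneg : ∀ a y, 0 ≤ P a y)
    (hP_sum : ∑ a : A, ∑ y : Y, P a y = 1)
    (S : Type) [Fintype S] (π : S → Y → ℝ) (α : S → A)
    -- π is a probability mass function
    (hπ_nonneg : ∀ s y, 0 ≤ π s y)
    (hπ_sum : ∑ s : S, ∑ y : Y, π s y = 1)
    -- (1) the label-marginal of π matches that of P
    (hmarg : ∀ y : Y, ∑ s : S, π s y = ∑ a : A, P a y)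
    -- (2) each realized signal's assigned score minimizes posterior expected loss
    (hopt : ∀ s : S, 0 < ∑ y : Y, π s y →
      ∀ a' : A, ∑ y : Y, π s y * L (α s) y ≤ ∑ y : Y, π s y * L a' y)
    -- (3) the induced joint distribution of scores and labels equals P
    (hjoint : ∀ (a : A) (y : Y), P a y = ∑ s : S, if α s = a then π s y else 0) :
    ∀ a a' : A, ∑ y : Y, P a y * L a y ≤ ∑ y : Y, P a y * L a' y :=
  SBR_implies_loss_calibrated_general P L S π α hπ_nonneg hopt hjoint
end

section
/- Let Y = {0,1}, let A be a finite nonempty subset of (0,1), and let P : A × Y → ℝ be a probability mass function; write P(a) = P(a,0) + P(a,1). Let L₁, L₀ : ℝ → ℝ be a differentiable strictly proper binary loss with weight function w (for every a ∈ (0,1): L₁'(a) = w(a)(a−1), L₀'(a) = w(a)·a, w(a) > 0). Then the following are equivalent: (i) scores cannot be improved by wholesale switching to any alternative score in (0,1), i.e., for every a ∈ A and every a' ∈ (0,1), P(a,1)L₁(a) + P(a,0)L₀(a) ≤ P(a,1)L₁(a') + P(a,0)L₀(a'); (ii) scores are calibrated, i.e., for every a ∈ A with P(a) > 0, a = P(a,1)/P(a).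 -/
open Set Finset

/-- For a differentiable strictly proper binary loss, loss-calibration
(no wholesale switch of a realized score to any alternative score in (0,1) reduces
expected loss) is equivalent to calibration (each realized score equals the
conditional probability of the positive label given that score). -/
theorem proper_loss_calibration_iff_calibrated
    (A : Finset ℝ) (hA_ne : A.Nonempty) (hA_sub : ∀ a ∈ A, a ∈ Ioo (0:ℝ) 1)
    (P : ℝ → Fin 2 → ℝ)
    (hP_nonneg : ∀ a ∈ A, ∀ y : Fin 2, 0 ≤ P a y)
    (hP_sum : ∑ a ∈ A, (P a 0 + P a 1) = 1)
    (L₁ L₀ w : ℝ → ℝ)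
    (hL₁ : ∀ a ∈ Ioo (0:ℝ) 1, HasDerivAt L₁ (w a * (a - 1)) a)
    (hL₀ : ∀ a ∈ Ioo (0:ℝ) 1, HasDerivAt L₀ (w a * a) a)
    (hw : ∀ a ∈ Ioo (0:ℝ) 1, 0 < w a) :
    (∀ a ∈ A, ∀ a' ∈ Ioo (0:ℝ) 1,
        P a 1 * L₁ a + P a 0 * L₀ a ≤ P a 1 * L₁ a' + P a 0 * L₀ a')
      ↔
    (∀ a ∈ A, 0 < P a 0 + P a 1 → a = P a 1 / (P a 0 + P a 1)) := by
  constructor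
  · intro h a ha hpos
    have haI := hA_sub a ha
    have hF : HasDerivAt (fun x => P a 1 * L₁ x + P a 0 * L₀ x)
        (w a * ((P a 0 + P a 1) * a - P a 1)) a := by
      have := ((hL₁ a haI).const_mul (P a 1)).add ((hL₀ a haI).const_mul (P a 0))
      exact this.congr_deriv (by ring)
    have hmin : IsLocalMin (fun x => P a 1 * L₁ x + P a 0 * L₀ x) a := by
      filter_upwards [Ioo_mem_nhds haI.1 haI.2] with x hx
      exact h a ha x hx
    have h0 := hmin.hasDerivAt_eq_zero hF
    have hw' := hw a haI
    have h1 : (P a 0 + P a 1) * a - P a 1 = 0 := by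
      rcases mul_eq_zero.mp h0 with h | h
      · exact absurd h hw'.ne'
      · exact h
    field_simp
    linarith
  · intro h a ha a' ha'
    have haI := hA_sub a ha
    rcases eq_or_lt_of_le (add_nonneg (hP_nonneg a ha 0) (hP_nonneg a ha 1)) with hz | hpos
    · have h1 : P a 1 = 0 := by
        have := hP_nonneg a ha 0; have := hP_nonneg a ha 1; linarith
      have h0 : P a 0 = 0 := by
        have := hP_nonneg a ha 0; have := hP_nonneg a ha 1; linarith
      simp [h0, h1]
    have hcal := h a ha hpos
    -- a = P a 1 / (P a 0 + P a 1), so (P a 0 + P a 1) * a = P a 1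
    have hkey : (P a 0 + P a 1) * a = P a 1 := by
      have h2 := hcal
      rw [eq_div_iff hpos.ne'] at h2
      linear_combination h2
    set f : ℝ → ℝ := fun x => P a 1 * L₁ x + P a 0 * L₀ x with hf
    set f' : ℝ → ℝ := fun x => w x * ((P a 0 + P a 1) * x - P a 1) with hf'
    have hFD : ∀ x ∈ Ioo (0:ℝ) 1, HasDerivAt f (f' x) x := by
      intro x hx
      have := ((hL₁ x hx).const_mul (P a 1)).add ((hL₀ x hx).const_mul (P a 0))
      exact this.congr_deriv (by simp only [hf']; ring)
    have hcont : ∀ s : Set ℝ, s ⊆ Ioo (0:ℝ) 1 → ContinuousOn f s := by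
      intro s hs x hx
      exact ((hFD x (hs hx)).continuousAt).continuousWithinAt
    rcases lt_trichotomy a' a with hlt | heq | hgt
    · obtain ⟨c, hc, hceq⟩ := exists_hasDerivAt_eq_slope f f' hlt
        (hcont _ (fun x hx => ⟨lt_of_lt_of_le ha'.1 hx.1, lt_of_le_of_lt hx.2 haI.2⟩))
        (fun x hx => hFD x ⟨lt_trans ha'.1 hx.1, lt_trans hx.2 haI.2⟩)
      have hcI : c ∈ Ioo (0:ℝ) 1 := ⟨lt_trans ha'.1 hc.1, lt_trans hc.2 haI.2⟩
      have hneg : f' c < 0 := by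
        have : (P a 0 + P a 1) * c - P a 1 < 0 := by nlinarith [hc.2]
        exact mul_neg_of_pos_of_neg (hw c hcI) this
      have : f a - f a' < 0 := by
        have hd : (0:ℝ) < a - a' := by linarith
        have h2 : f a - f a' = f' c * (a - a') := by
          rw [hceq]; field_simp
        rw [h2]
        exact mul_neg_of_neg_of_pos hneg hd
      simpa [hf] using le_of_lt (by linarith : f a < f a')
    · simp [heq]
    · obtain ⟨c, hc, hceq⟩ := exists_hasDerivAt_eq_slope f f' hgt
        (hcont _ (fun x hx => ⟨lt_of_lt_of_le haI.1 hx.1, lt_of_le_of_lt hx.2 ha'.2⟩))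
        (fun x hx => hFD x ⟨lt_trans haI.1 hx.1, lt_trans hx.2 ha'.2⟩)
      have hcI : c ∈ Ioo (0:ℝ) 1 := ⟨lt_trans haI.1 hc.1, lt_trans hc.2 ha'.2⟩
      have hposd : 0 < f' c := by
        have : 0 < (P a 0 + P a 1) * c - P a 1 := by nlinarith [hc.1]
        exact mul_pos (hw c hcI) this
      have : 0 < f a' - f a := by
        have hd : (0:ℝ) < a' - a := by linarith
        have h2 : f a' - f a = f' c * (a' - a) := by
          rw [hceq]; field_simp
        rw [h2]
        exact mul_pos hposd hd
      simpa [hf] using le_of_lt (by linarith : f a < f a')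
end
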